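/- Let χ : [0,∞) → ℝ be a smooth cutoff function equal to 1 on [0,1/2] and 0 on [1,∞). Let f : ℝ → ℝ be of class C² with f, f′, f″ integrable and vanishing at ±∞. Then for every δ > 0, (1/π) ∬_{x∈ℝ, y>0} ( y f″(x)χ(y) + (f(x) − iy f′(x))χ′(y) ) e^{−iδx} e^{−δy} dx dy = −(1/π) ∫_ℝ f(x) e^{−iδx} dx. -/

import Mathlib

open MeasureTheory Filter Set

noncomputable section

/-- Integrability of `h·E` where `E x = exp(-(iδx))`. -/
lemma intE (δ : ℝ) (h : ℝ → ℝ) (hi : Integrable h) :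
    Integrable (fun x : ℝ => (h x : ℂ) * Complex.exp (-(Complex.I * δ * x))) := by
  have : Integrable (fun x : ℝ => Complex.exp (-(Complex.I * δ * x)) * (h x : ℂ)) := by
    apply Integrable.bdd_mul (c := 1) hi.ofReal
    · exact (Complex.continuous_exp.comp (by continuity)).aestronglyMeasurable
    · refine Eventually.of_forall (fun x => ?_)
      simp [Complex.norm_exp]
  simpa [mul_comm] using this

/-- Integration by parts on ℝ against `exp(-(iδx))`. -/
lemma keyA (δ : ℝ) (g : ℝ → ℝ) (hg : Differentiable ℝ g) (hgi : Integrable g)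
    (hg'i : Integrable (deriv g)) (ht : Tendsto g atTop (nhds 0))
    (hb : Tendsto g atBot (nhds 0)) :
    ∫ x : ℝ, ((deriv g x : ℝ) : ℂ) * Complex.exp (-(Complex.I * δ * x))
      = Complex.I * δ * ∫ x : ℝ, (g x : ℂ) * Complex.exp (-(Complex.I * δ * x)) := by
  set E : ℝ → ℂ := fun x => Complex.exp (-(Complex.I * δ * x)) with hE
  have hEd : ∀ x : ℝ, HasDerivAt E (-(Complex.I * δ) * E x) x := by
    intro x
    have h1 : HasDerivAt (fun x : ℝ => (x : ℂ)) 1 x := (hasDerivAt_id x).ofReal_comp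
    have h2 : HasDerivAt (fun x : ℝ => -(Complex.I * δ * x)) (-(Complex.I * δ)) x := by
      simpa using ((h1.const_mul (Complex.I * δ)).fun_neg)
    convert h2.cexp using 1
    ring
  have hGd : ∀ x : ℝ, HasDerivAt (fun x => (g x : ℂ) * E x)
      (((deriv g x : ℝ) : ℂ) * E x + (g x : ℂ) * (-(Complex.I * δ) * E x)) x := by
    intro x
    exact ((hg x).hasDerivAt.ofReal_comp).mul (hEd x)
  have hint1 : Integrable (fun x : ℝ => ((deriv g x : ℝ) : ℂ) * E x) := intE δ _ hg'i
  have hint2 : Integrable (fun x : ℝ => (g x : ℂ) * (-(Complex.I * δ) * E x)) := by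
    have heq : (fun x : ℝ => ((g x : ℝ) : ℂ) * (-(Complex.I * δ) * E x))
        = (fun x : ℝ => -(Complex.I * δ) * (((g x : ℝ) : ℂ) * E x)) := by
      funext x; ring
    rw [heq]
    exact (intE δ g hgi).const_mul _
  have hnorm : ∀ x : ℝ, ‖(g x : ℂ) * E x‖ = ‖g x‖ := by
    intro x
    simp [hE, Complex.norm_exp]
  have htt : Tendsto (fun x => (g x : ℂ) * E x) atTop (nhds 0) := by
    rw [tendsto_zero_iff_norm_tendsto_zero]
    simp only [hnorm]
    exact (tendsto_zero_iff_norm_tendsto_zero.mp ht)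
  have htb : Tendsto (fun x => (g x : ℂ) * E x) atBot (nhds 0) := by
    rw [tendsto_zero_iff_norm_tendsto_zero]
    simp only [hnorm]
    exact (tendsto_zero_iff_norm_tendsto_zero.mp hb)
  have hzero : ∫ x : ℝ, (((deriv g x : ℝ) : ℂ) * E x + (g x : ℂ) * (-(Complex.I * δ) * E x)) = 0 := by
    have := MeasureTheory.integral_of_hasDerivAt_of_tendsto hGd (hint1.add hint2) htb htt
    simpa using this
  rw [integral_add hint1 hint2] at hzero
  have h2 : ∫ x : ℝ, (g x : ℂ) * (-(Complex.I * δ) * E x)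
      = -(Complex.I * δ) * ∫ x : ℝ, (g x : ℂ) * E x := by
    rw [← MeasureTheory.integral_const_mul]
    congr 1; ext x; ring
  rw [h2] at hzero
  linear_combination hzero

/-- Integrability on `(0,∞)` of continuous functions vanishing beyond 1. -/
lemma intOn (h : ℝ → ℝ) (hc : Continuous h) (h0 : ∀ y > (1:ℝ), h y = 0) :
    IntegrableOn h (Ioi (0:ℝ)) := by
  have hU : Ioi (0:ℝ) = Ioc (0:ℝ) 1 ∪ Ioi 1 := (Ioc_union_Ioi_eq_Ioi (by norm_num)).symm
  rw [hU]
  apply IntegrableOn.union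
  · exact hc.integrableOn_Ioc
  · have : IntegrableOn (fun _ : ℝ => (0:ℝ)) (Ioi 1) := integrableOn_zero
    exact (integrableOn_congr_fun (fun y hy => h0 y hy) measurableSet_Ioi).mpr this

/-- The `y`-integral identity `J = -1`. -/
lemma keyB (χ : ℝ → ℝ) (hχ_smooth : ContDiff ℝ (⊤ : ℕ∞) χ)
    (hχ_one : ∀ y ∈ Set.Icc (0 : ℝ) (1 / 2), χ y = 1)
    (hχ_zero : ∀ y ∈ Set.Ici (1 : ℝ), χ y = 0) (δ : ℝ) (hδ : 0 < δ) :
    -δ^2 * (∫ y in Ioi (0:ℝ), y * χ y * Real.exp (-(δ*y)))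
      + (∫ y in Ioi (0:ℝ), deriv χ y * Real.exp (-(δ*y)))
      + δ * (∫ y in Ioi (0:ℝ), y * deriv χ y * Real.exp (-(δ*y))) = -1 := by
  have hχd : Differentiable ℝ χ := hχ_smooth.differentiable (by simp)
  have hχc' : Continuous (deriv χ) := hχ_smooth.continuous_deriv (by simp)
  have hχ'0 : ∀ y > (1:ℝ), deriv χ y = 0 := by
    intro y hy
    have hev : χ =ᶠ[nhds y] (fun _ => (0:ℝ)) := by
      filter_upwards [Ioi_mem_nhds hy] with z hz
      exact hχ_zero z (le_of_lt (show (1:ℝ) < z from hz))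
    rw [hev.deriv_eq]
    simp
  have hχc : Continuous χ := hχ_smooth.continuous
  have int1 : IntegrableOn (fun y => y * χ y * Real.exp (-(δ*y))) (Ioi (0:ℝ)) := by
    apply intOn _ (by fun_prop)
    intro y hy; simp [hχ_zero y hy.le]
  have int2 : IntegrableOn (fun y => deriv χ y * Real.exp (-(δ*y))) (Ioi (0:ℝ)) := by
    apply intOn _ (by fun_prop)
    intro y hy; simp [hχ'0 y hy]
  have int3 : IntegrableOn (fun y => y * deriv χ y * Real.exp (-(δ*y))) (Ioi (0:ℝ)) := by
    apply intOn _ (by fun_prop)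
    intro y hy; simp [hχ'0 y hy]
  set ψ : ℝ → ℝ := fun y => -δ^2 * (y * χ y * Real.exp (-(δ*y)))
    + (deriv χ y * Real.exp (-(δ*y)) + δ * (y * deriv χ y * Real.exp (-(δ*y)))) with hψ
  set g : ℝ → ℝ := fun y => (1 + δ*y) * χ y * Real.exp (-(δ*y)) with hg
  have hder : ∀ y ∈ Ici (0:ℝ), HasDerivAt g (ψ y) y := by
    intro y _
    have hA : HasDerivAt (fun y : ℝ => 1 + δ*y) δ y := by
      simpa using ((hasDerivAt_id y).const_mul δ).const_add 1
    have hB : HasDerivAt χ (deriv χ y) y := (hχd y).hasDerivAt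
    have hC : HasDerivAt (fun y : ℝ => Real.exp (-(δ*y))) (-δ * Real.exp (-(δ*y))) y := by
      have h0 : HasDerivAt (fun y : ℝ => -(δ*y)) (-δ) y := by
        simpa using ((hasDerivAt_id y).const_mul δ).fun_neg
      convert h0.exp using 1
      ring
    have := (hA.fun_mul hB).fun_mul hC
    exact this.congr_deriv (by simp only [hψ]; ring)
  have hψint : IntegrableOn ψ (Ioi (0:ℝ)) :=
    (int1.const_mul _).add (int2.add (int3.const_mul _))
  have htend : Tendsto g atTop (nhds 0) := by
    apply tendsto_const_nhds.congr'
    filter_upwards [eventually_ge_atTop (1:ℝ)] with y hy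
    simp [hg, hχ_zero y hy]
  have hFTC := integral_Ioi_of_hasDerivAt_of_tendsto' hder hψint htend
  have hg0 : g 0 = 1 := by
    have : χ 0 = 1 := hχ_one 0 ⟨le_refl _, by norm_num⟩
    simp [hg, this]
  rw [hg0] at hFTC
  have hsplit : ∫ y in Ioi (0:ℝ), ψ y
      = -δ^2 * (∫ y in Ioi (0:ℝ), y * χ y * Real.exp (-(δ*y)))
      + ((∫ y in Ioi (0:ℝ), deriv χ y * Real.exp (-(δ*y)))
        + δ * (∫ y in Ioi (0:ℝ), y * deriv χ y * Real.exp (-(δ*y)))) := by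
    have i1 : Integrable (fun y => -δ^2 * (y * χ y * Real.exp (-(δ*y))))
        (volume.restrict (Ioi 0)) := int1.const_mul _
    have i3 : Integrable (fun y => δ * (y * deriv χ y * Real.exp (-(δ*y))))
        (volume.restrict (Ioi 0)) := int3.const_mul _
    have i23 : Integrable (fun y => deriv χ y * Real.exp (-(δ*y))
        + δ * (y * deriv χ y * Real.exp (-(δ*y)))) (volume.restrict (Ioi 0)) := int2.add i3
    rw [show (∫ y in Ioi (0:ℝ), ψ y) = ∫ y in Ioi (0:ℝ), (-δ^2 * (y * χ y * Real.exp (-(δ*y)))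
        + (deriv χ y * Real.exp (-(δ*y)) + δ * (y * deriv χ y * Real.exp (-(δ*y))))) from rfl,
      MeasureTheory.integral_add i1 i23, MeasureTheory.integral_add int2 i3,
      MeasureTheory.integral_const_mul, MeasureTheory.integral_const_mul]
  rw [hsplit] at hFTC
  linarith

/-- The integration-by-parts identity used in the approximate explicit formula:
for a smooth cutoff `χ` (equal to `1` on `[0,1/2]`, `0` on `[1,∞)`) and a `C²`
function `f` with `f, f', f''` integrable and vanishing at `±∞`, and any `δ > 0`,
`(1/π) ∬_{y>0} (y f''(x) χ(y) + (f(x) - i y f'(x)) χ'(y)) e^{-iδx} e^{-δy} dx dy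
  = -(1/π) ∫ f(x) e^{-iδx} dx`. -/
theorem integration_by_parts_identity
    (χ : ℝ → ℝ) (hχ_smooth : ContDiff ℝ (⊤ : ℕ∞) χ)
    (hχ_one : ∀ y ∈ Set.Icc (0 : ℝ) (1 / 2), χ y = 1)
    (hχ_zero : ∀ y ∈ Set.Ici (1 : ℝ), χ y = 0)
    (f : ℝ → ℝ) (hf : ContDiff ℝ 2 f)
    (hf1 : Integrable f) (hf2 : Integrable (deriv f))
    (hf3 : Integrable (deriv (deriv f)))
    (hv1 : Tendsto f atTop (nhds 0)) (hv1' : Tendsto f atBot (nhds 0))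
    (hv2 : Tendsto (deriv f) atTop (nhds 0)) (hv2' : Tendsto (deriv f) atBot (nhds 0))
    (hv3 : Tendsto (deriv (deriv f)) atTop (nhds 0))
    (hv3' : Tendsto (deriv (deriv f)) atBot (nhds 0))
    (δ : ℝ) (hδ : 0 < δ) :
    (Real.pi : ℂ)⁻¹ *
        ∫ x : ℝ, ∫ y in Set.Ioi (0 : ℝ),
          ((y : ℂ) * deriv (deriv f) x * χ y +
            ((f x : ℂ) - Complex.I * y * deriv f x) * deriv χ y) *
            Complex.exp (-(Complex.I * δ * x)) * Complex.exp (-(δ * y : ℂ))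
      = -(Real.pi : ℂ)⁻¹ * ∫ x : ℝ, (f x : ℂ) * Complex.exp (-(Complex.I * δ * x)) := by

  have hχd : Differentiable ℝ χ := hχ_smooth.differentiable (by simp)
  have hχc : Continuous χ := hχ_smooth.continuous
  have hχc' : Continuous (deriv χ) := hχ_smooth.continuous_deriv (by simp)
  have hχ'0 : ∀ y > (1:ℝ), deriv χ y = 0 := by
    intro y hy
    have hev : χ =ᶠ[nhds y] (fun _ => (0:ℝ)) := by
      filter_upwards [Ioi_mem_nhds hy] with z hz
      exact hχ_zero z (le_of_lt (show (1:ℝ) < z from hz))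
    rw [hev.deriv_eq]
    simp
  have int1 : IntegrableOn (fun y => y * χ y * Real.exp (-(δ*y))) (Ioi (0:ℝ)) := by
    apply intOn _ (by fun_prop)
    intro y hy; simp [hχ_zero y hy.le]
  have int2 : IntegrableOn (fun y => deriv χ y * Real.exp (-(δ*y))) (Ioi (0:ℝ)) := by
    apply intOn _ (by fun_prop)
    intro y hy; simp [hχ'0 y hy]
  have int3 : IntegrableOn (fun y => y * deriv χ y * Real.exp (-(δ*y))) (Ioi (0:ℝ)) := by
    apply intOn _ (by fun_prop)
    intro y hy; simp [hχ'0 y hy]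
  set C1 : ℝ := ∫ y in Ioi (0:ℝ), y * χ y * Real.exp (-(δ*y)) with hC1
  set C2 : ℝ := ∫ y in Ioi (0:ℝ), deriv χ y * Real.exp (-(δ*y)) with hC2
  set C3 : ℝ := ∫ y in Ioi (0:ℝ), y * deriv χ y * Real.exp (-(δ*y)) with hC3
  set E : ℝ → ℂ := fun x => Complex.exp (-(Complex.I * δ * x)) with hE
  have hfd : Differentiable ℝ f := hf.differentiable two_ne_zero
  have hf' : ContDiff ℝ 1 (deriv f) := by
    have h2 : ContDiff ℝ (1 + 1 : ℕ) f := by exact_mod_cast hf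
    exact (contDiff_succ_iff_deriv.mp h2).2.2
  have hfd' : Differentiable ℝ (deriv f) := hf'.differentiable one_ne_zero
  -- the inner integral
  have hinner : ∀ x : ℝ, (∫ y in Set.Ioi (0 : ℝ),
        (((y : ℂ) * deriv (deriv f) x * χ y +
          ((f x : ℂ) - Complex.I * y * deriv f x) * deriv χ y) *
          Complex.exp (-(Complex.I * δ * x)) * Complex.exp (-(δ * y : ℂ))))
      = E x * (((deriv (deriv f) x : ℝ) : ℂ) * C1 + ((f x : ℝ) : ℂ) * C2
          - Complex.I * ((deriv f x : ℝ) : ℂ) * C3) := by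
    intro x
    set a : ℂ := ((deriv (deriv f) x : ℝ) : ℂ) * E x with ha
    set b : ℂ := ((f x : ℝ) : ℂ) * E x with hb
    set c : ℂ := -Complex.I * ((deriv f x : ℝ) : ℂ) * E x with hc
    have step1 : (∫ y in Set.Ioi (0 : ℝ),
        (((y : ℂ) * deriv (deriv f) x * χ y +
          ((f x : ℂ) - Complex.I * y * deriv f x) * deriv χ y) *
          Complex.exp (-(Complex.I * δ * x)) * Complex.exp (-(δ * y : ℂ))))
        = ∫ y in Set.Ioi (0 : ℝ),
          (a * ((y * χ y * Real.exp (-(δ*y)) : ℝ) : ℂ)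
          + (b * ((deriv χ y * Real.exp (-(δ*y)) : ℝ) : ℂ)
            + c * ((y * deriv χ y * Real.exp (-(δ*y)) : ℝ) : ℂ))) := by
      apply MeasureTheory.integral_congr_ae
      filter_upwards with y
      simp only [ha, hb, hc, hE]
      push_cast [Complex.ofReal_exp]
      ring
    rw [step1]
    have i1 : Integrable (fun y : ℝ => a * ((y * χ y * Real.exp (-(δ*y)) : ℝ) : ℂ))
        (volume.restrict (Ioi 0)) := int1.ofReal.const_mul _
    have i2 : Integrable (fun y : ℝ => b * ((deriv χ y * Real.exp (-(δ*y)) : ℝ) : ℂ))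
        (volume.restrict (Ioi 0)) := int2.ofReal.const_mul _
    have i3 : Integrable (fun y : ℝ => c * ((y * deriv χ y * Real.exp (-(δ*y)) : ℝ) : ℂ))
        (volume.restrict (Ioi 0)) := int3.ofReal.const_mul _
    have i23 : Integrable (fun y : ℝ => b * ((deriv χ y * Real.exp (-(δ*y)) : ℝ) : ℂ)
        + c * ((y * deriv χ y * Real.exp (-(δ*y)) : ℝ) : ℂ)) (volume.restrict (Ioi 0)) :=
      i2.add i3
    have o1 : ∫ y in Ioi (0:ℝ), ((y * χ y * Real.exp (-(δ*y)) : ℝ) : ℂ) = (C1 : ℂ) := by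
      rw [hC1]; exact integral_ofReal
    have o2 : ∫ y in Ioi (0:ℝ), ((deriv χ y * Real.exp (-(δ*y)) : ℝ) : ℂ) = (C2 : ℂ) := by
      rw [hC2]; exact integral_ofReal
    have o3 : ∫ y in Ioi (0:ℝ), ((y * deriv χ y * Real.exp (-(δ*y)) : ℝ) : ℂ) = (C3 : ℂ) := by
      rw [hC3]; exact integral_ofReal
    rw [MeasureTheory.integral_add i1 i23, MeasureTheory.integral_add i2 i3,
      MeasureTheory.integral_const_mul, MeasureTheory.integral_const_mul,
      MeasureTheory.integral_const_mul, o1, o2, o3, ha, hb, hc]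
    ring
  have houter : (∫ x : ℝ, ∫ y in Set.Ioi (0 : ℝ),
        (((y : ℂ) * deriv (deriv f) x * χ y +
          ((f x : ℂ) - Complex.I * y * deriv f x) * deriv χ y) *
          Complex.exp (-(Complex.I * δ * x)) * Complex.exp (-(δ * y : ℂ))))
      = ∫ x : ℝ, ((C1 : ℂ) * (((deriv (deriv f) x : ℝ) : ℂ) * E x)
          + ((C2 : ℂ) * (((f x : ℝ) : ℂ) * E x)
            + (-Complex.I * C3) * (((deriv f x : ℝ) : ℂ) * E x))) := by
    apply MeasureTheory.integral_congr_ae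
    filter_upwards with x
    rw [hinner x]
    ring
  rw [houter]
  have j1 : Integrable (fun x : ℝ => (C1 : ℂ) * (((deriv (deriv f) x : ℝ) : ℂ) * E x)) :=
    (intE δ _ hf3).const_mul _
  have j2 : Integrable (fun x : ℝ => (C2 : ℂ) * (((f x : ℝ) : ℂ) * E x)) :=
    (intE δ _ hf1).const_mul _
  have j3 : Integrable (fun x : ℝ => (-Complex.I * C3) * (((deriv f x : ℝ) : ℂ) * E x)) :=
    (intE δ _ hf2).const_mul _
  have j23 : Integrable (fun x : ℝ => (C2 : ℂ) * (((f x : ℝ) : ℂ) * E x)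
      + (-Complex.I * C3) * (((deriv f x : ℝ) : ℂ) * E x)) := j2.add j3
  rw [MeasureTheory.integral_add j1 j23, MeasureTheory.integral_add j2 j3,
    MeasureTheory.integral_const_mul, MeasureTheory.integral_const_mul,
    MeasureTheory.integral_const_mul]
  have kA1 : (∫ x : ℝ, (((f x : ℝ) : ℂ) * E x)) = ∫ x : ℝ, (((f x : ℝ) : ℂ) * E x) := rfl
  have kA2 : (∫ x : ℝ, (((deriv f x : ℝ) : ℂ) * E x))
      = Complex.I * δ * ∫ x : ℝ, (((f x : ℝ) : ℂ) * E x) :=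
    keyA δ f hfd hf1 hf2 hv1 hv1'
  have kA3 : (∫ x : ℝ, (((deriv (deriv f) x : ℝ) : ℂ) * E x))
      = Complex.I * δ * ∫ x : ℝ, (((deriv f x : ℝ) : ℂ) * E x) :=
    keyA δ (deriv f) hfd' hf2 hf3 hv2 hv2'
  rw [kA3, kA2]
  have hcast : (-(δ:ℂ)^2 * C1 + C2 + δ * C3) = -1 := by
    exact_mod_cast congrArg (fun r : ℝ => (r : ℂ))
      (keyB χ hχ_smooth hχ_one hχ_zero δ hδ)
  have hI : Complex.I * Complex.I = -1 := Complex.I_mul_I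
  set I0 : ℂ := ∫ x : ℝ, (((f x : ℝ) : ℂ) * E x) with hI0
  linear_combination (Real.pi : ℂ)⁻¹ * I0 * hcast
    + (Real.pi : ℂ)⁻¹ * ((δ:ℂ)^2 * C1 * I0 - (δ:ℂ) * C3 * I0) * hI
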